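/- The overall dwell-time distribution inherits periodic memorylessness: if d(r) = ∑_{t=1}^{L} w(t) d^{(t)}(r) where each d^{(t)}(r) = (1 - γ(t+r-1)) ∏_{j=1}^{r-1} γ(t+j-1) with γ L-periodic and weights w(t) summing to 1, and R has pmf d, then P(R > L + s | R > L) = P(R > s) for all s ∈ ℕ. -/

import Mathlib

/-!
Summing the pmf from `s + 1` on telescopes to the survival function
`P(R > s) = ∑ₜ w t ∏_{j<s} γ (t + j)`. By periodicity every block of `L` consecutive factors
has the same product `∏_{j<L} γ j`, so `P(R > L + s) = P(R > L) · P(R > s)`.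
-/

open MeasureTheory ProbabilityTheory
open Finset Function

theorem Function.Periodic.prod_range_add {M : Type*} [CommMonoid M] {f : ℕ → M} {L : ℕ}
    (hf : Periodic f L) (t : ℕ) : ∏ j ∈ range L, f (t + j) = ∏ j ∈ range L, f j := by
  have h := congrArg (fun s => (s.map f).prod) (Nat.multiset_Ico_map_mod t L)
  simp only [Multiset.map_map, comp_def, hf.map_mod_nat] at h
  calc ∏ j ∈ range L, f (t + j) = ∏ k ∈ Ico t (t + L), f k := by
        rw [prod_Ico_eq_prod_range, Nat.add_sub_cancel_left]
    _ = ∏ j ∈ range L, f j := h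

/-- `P(R > s)` for the mixture over phases `t ∈ T`, with weights `w t`, of the dwell times that
survive their `j`-th step with probability `γ (t + j)`. -/
def mixtureSurvival (T : Finset ℕ) (w γ : ℕ → ℝ) (s : ℕ) : ℝ :=
  ∑ t ∈ T, w t * ∏ j ∈ range s, γ (t + j)

section mixtureSurvival

variable {T : Finset ℕ} {w γ : ℕ → ℝ}

theorem mixtureSurvival_zero : mixtureSurvival T w γ 0 = ∑ t ∈ T, w t := by
  simp [mixtureSurvival]

theorem mixtureSurvival_sub_succ (s : ℕ) :
    mixtureSurvival T w γ s - mixtureSurvival T w γ (s + 1) =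
      ∑ t ∈ T, w t * ((1 - γ (t + s)) * ∏ j ∈ range s, γ (t + j)) := by
  simp only [mixtureSurvival, ← sum_sub_distrib, prod_range_succ]
  exact sum_congr rfl fun t _ => by ring

theorem mixtureSurvival_nonneg (hw : ∀ t, 0 ≤ w t) (hγ : ∀ n, 0 ≤ γ n) (s : ℕ) :
    0 ≤ mixtureSurvival T w γ s :=
  sum_nonneg fun t _ => mul_nonneg (hw t) (prod_nonneg fun _ _ => hγ _)

theorem mixtureSurvival_succ_le (hw : ∀ t, 0 ≤ w t) (hγ₀ : ∀ n, 0 ≤ γ n) (hγ₁ : ∀ n, γ n ≤ 1)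
    (s : ℕ) :
    mixtureSurvival T w γ (s + 1) ≤ mixtureSurvival T w γ s := by
  rw [← sub_nonneg, mixtureSurvival_sub_succ]
  exact sum_nonneg fun t _ => mul_nonneg (hw t)
    (mul_nonneg (sub_nonneg.mpr (hγ₁ _)) (prod_nonneg fun _ _ => hγ₀ _))

theorem mixtureSurvival_add_period {L : ℕ} (hγ : Periodic γ L) (s : ℕ) :
    mixtureSurvival T w γ (L + s) = (∏ j ∈ range L, γ j) * mixtureSurvival T w γ s := by
  simp only [mixtureSurvival, mul_sum, prod_range_add, hγ.prod_range_add]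
  refine sum_congr rfl fun t _ => ?_
  have hshift : ∀ j, γ (t + (L + j)) = γ (t + j) := fun j => by
    rw [← add_assoc, add_right_comm, hγ]
  simp only [hshift]
  ring

end mixtureSurvival

section Survival

variable {Ω : Type*} [MeasurableSpace Ω] {μ : Measure Ω} {R : Ω → ℕ}

theorem measure_lt_eq_ofReal_of_measure_eq_succ [IsProbabilityMeasure μ] (hR : Measurable R)
    {S : ℕ → ℝ} (hS₀ : S 0 = 1) (hS_nonneg : ∀ s, 0 ≤ S s) (hS_succ : ∀ s, S (s + 1) ≤ S s)
    (hzero : μ {ω | R ω = 0} = 0)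
    (hpmf : ∀ s, μ {ω | R ω = s + 1} = ENNReal.ofReal (S s - S (s + 1)))
    (s : ℕ) : μ {ω | s < R ω} = ENNReal.ofReal (S s) := by
  induction s with
  | zero =>
    have hcompl : {ω | 0 < R ω} = {ω | R ω = 0}ᶜ := by
      ext ω; simp [Nat.pos_iff_ne_zero]
    have hmeas₀ : MeasurableSet {ω | R ω = 0} := hR (measurableSet_singleton 0)
    rw [hcompl, prob_compl_eq_one_sub hmeas₀, hzero, hS₀]
    simp
  | succ s ih =>
    have hsplit : {ω | s < R ω} = {ω | R ω = s + 1} ∪ {ω | s + 1 < R ω} := by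
      ext ω; simp only [Set.mem_ofPred_eq, Set.mem_union]; omega
    have hdisj : Disjoint {ω | R ω = s + 1} {ω | s + 1 < R ω} :=
      Set.disjoint_left.mpr fun ω h₁ h₂ => by simp_all
    rw [hsplit, measure_union hdisj (hR measurableSet_Ioi), hpmf,
      ← sub_add_cancel (S s) (S (s + 1)),
      ENNReal.ofReal_add (sub_nonneg.mpr (hS_succ s)) (hS_nonneg _), add_sub_cancel_right] at ih
    exact (ENNReal.add_right_inj ENNReal.ofReal_ne_top).mp ih

theorem cond_lt_add_eq_of_measure_lt_add [IsFiniteMeasure μ] (hR : Measurable R) {L s : ℕ}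
    (hL : μ {ω | L < R ω} ≠ 0)
    (hmul : μ {ω | L + s < R ω} = μ {ω | L < R ω} * μ {ω | s < R ω}) :
    cond μ {ω | L < R ω} {ω | L + s < R ω} = μ {ω | s < R ω} := by
  have hinter : {ω | L < R ω} ∩ {ω | L + s < R ω} = {ω | L + s < R ω} := by
    ext ω; simp only [Set.mem_inter_iff, Set.mem_ofPred_eq]; omega
  have hmeasL : MeasurableSet {ω | L < R ω} := hR measurableSet_Ioi
  rw [cond_apply hmeasL, hinter, hmul, ← mul_assoc,
    ENNReal.inv_mul_cancel hL (measure_ne_top μ _), one_mul]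

end Survival

theorem stmt11_general {Ω : Type*} [MeasurableSpace Ω] (μ : Measure Ω) [IsProbabilityMeasure μ]
    (L : ℕ) (γ : ℕ → ℝ)
    (hγ : ∀ n, 0 < γ n ∧ γ n < 1)
    (hper : ∀ u, γ (u + L) = γ u)
    (w : ℕ → ℝ) (hw : ∀ t, 0 ≤ w t ∧ w t ≤ 1)
    (hwsum : ∑ t ∈ Finset.Icc 1 L, w t = 1)
    (R : Ω → ℕ) (hmeas : Measurable R)
    (hpmf : ∀ r, 1 ≤ r →
      μ {ω | R ω = r}
        = ENNReal.ofReal (∑ t ∈ Finset.Icc 1 L,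
            w t * ((1 - γ (t + r - 1)) * ∏ j ∈ Finset.range (r - 1), γ (t + j))))
    (hzero : μ {ω | R ω = 0} = 0) :
    ∀ s : ℕ,
      ProbabilityTheory.cond μ {ω | L < R ω} {ω | L + s < R ω}
        = μ {ω | s < R ω} := by
  intro s
  have hw₀ : ∀ t, 0 ≤ w t := fun t => (hw t).1
  have hγ₀ : ∀ n, 0 ≤ γ n := fun n => (hγ n).1.le
  have hsurv : ∀ n, μ {ω | n < R ω} = ENNReal.ofReal (mixtureSurvival (Icc 1 L) w γ n) :=
    measure_lt_eq_ofReal_of_measure_eq_succ hmeas (by rw [mixtureSurvival_zero, hwsum])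
      (mixtureSurvival_nonneg hw₀ hγ₀) (mixtureSurvival_succ_le hw₀ hγ₀ fun n => (hγ n).2.le)
      hzero fun n => by
        rw [hpmf (n + 1) n.succ_pos, mixtureSurvival_sub_succ]
        simp only [← add_assoc, Nat.add_sub_cancel]
  have hP : 0 < ∏ j ∈ range L, γ j := prod_pos fun j _ => (hγ j).1
  have hSL : mixtureSurvival (Icc 1 L) w γ L = ∏ j ∈ range L, γ j := by
    have h := mixtureSurvival_add_period (T := Icc 1 L) (w := w) hper 0
    rwa [add_zero, mixtureSurvival_zero, hwsum, mul_one] at h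
  refine cond_lt_add_eq_of_measure_lt_add hmeas ?_ ?_
  · rw [hsurv, hSL]
    exact (ENNReal.ofReal_pos.mpr hP).ne'
  · rw [hsurv, hsurv, hsurv, mixtureSurvival_add_period hper, hSL, ENNReal.ofReal_mul hP.le]

/-- The overall dwell-time distribution inherits periodic
memorylessness: if R has pmf
d(r) = ∑_{t=1}^{L} w(t) (1 - γ(t+r-1)) ∏_{j=1}^{r-1} γ(t+j-1), r ≥ 1,
with γ L-periodic in (0,1), 0 < ∏_{j=1}^{L} γ(j) < 1, and weights w(t) ∈ [0,1]
summing to one, then P(R > L + s | R > L) = P(R > s) for all s ∈ ℕ. -/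
theorem stmt11 {Ω : Type*} [MeasurableSpace Ω] (μ : Measure Ω) [IsProbabilityMeasure μ]
    (L : ℕ) (hL : 1 ≤ L) (γ : ℕ → ℝ)
    (hγ : ∀ n, 0 < γ n ∧ γ n < 1)
    (hper : ∀ u, γ (u + L) = γ u)
    (hprodpos : 0 < ∏ j ∈ Finset.range L, γ (1 + j))
    (hprodlt : ∏ j ∈ Finset.range L, γ (1 + j) < 1)
    (w : ℕ → ℝ) (hw : ∀ t, 0 ≤ w t ∧ w t ≤ 1)
    (hwsum : ∑ t ∈ Finset.Icc 1 L, w t = 1)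
    (R : Ω → ℕ) (hmeas : Measurable R)
    (hpmf : ∀ r, 1 ≤ r →
      μ {ω | R ω = r}
        = ENNReal.ofReal (∑ t ∈ Finset.Icc 1 L,
            w t * ((1 - γ (t + r - 1)) * ∏ j ∈ Finset.range (r - 1), γ (t + j))))
    (hzero : μ {ω | R ω = 0} = 0) :
    ∀ s : ℕ,
      ProbabilityTheory.cond μ {ω | L < R ω} {ω | L + s < R ω}
        = μ {ω | s < R ω} :=
  stmt11_general μ L γ hγ hper w hw hwsum R hmeas hpmf hzero
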